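/- Discrete-time valuation of a European mirror option with monotone increasing payoff: with q*₊(0) = ν(x*_T, 0) and the backward recursion q*₊((n+1)ε) = max over mirroring/no-mirroring at time T-(n+1)ε of the Gaussian expectation (with drift (α - σ²/2)ε and variance σ²ε) of q*₊(nε), one has for every n ≥ 0: q*₊(nε) = ν( x*_{T-nε} + (σ²/2 + |α - σ²/2|)·nε , σ²·nε ). -/

import Mathlib

open MeasureTheory

/-- Gaussian smoothing of the payoff `f` in log-coordinates, extended to variance `0`. -/
noncomputable def nu (f : ℝ → ℝ) (z s : ℝ) : ℝ :=
  if s = 0 then f (Real.exp z)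
  else (Real.sqrt (2 * Real.pi * s))⁻¹ *
    ∫ x : ℝ, f (Real.exp x) * Real.exp (-(x - z + s/2)^2 / (2*s))

/-!
Under the risk-neutral dynamics `ν(z, s)` is the expectation of `f ∘ exp` against the normal law
`N(z - s/2, s)`. Since Gaussian laws convolve, one step of the recursion, whether mirrored or
not, sends `ν(·, S)` to `ν(· ± m + T/2, S + T)` with drift `m = (α - σ²/2)ε` and variance
`T = σ²ε`. As `ν` is increasing in its first argument, the holder's maximum picks the sign of
`m`, so each step adds `|m| + T/2` to the location.
-/

open Real ProbabilityTheory
open scoped NNReal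

namespace ProbabilityTheory

variable {μ : ℝ} {v : ℝ≥0}

lemma integral_gaussianReal_eq_mul_integral (hv : v ≠ 0) (g : ℝ → ℝ) :
    ∫ x, g x ∂gaussianReal μ v =
      (√(2 * π * v))⁻¹ * ∫ x, g x * rexp (-(x - μ) ^ 2 / (2 * v)) := by
  rw [integral_gaussianReal_eq_integral_smul hv, ← integral_const_mul]
  congr 1 with x
  rw [gaussianPDFReal, smul_eq_mul]
  ring

lemma integrable_gaussianReal_iff (hv : v ≠ 0) {g : ℝ → ℝ} :
    Integrable g (gaussianReal μ v) ↔
      Integrable (fun x ↦ g x * rexp (-(x - μ) ^ 2 / (2 * v))) := by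
  rw [gaussianReal_of_var_ne_zero _ hv, integrable_withDensity_iff_integrable_smul'
    (measurable_gaussianPDF _ _) (ae_of_all _ fun _ ↦ gaussianPDF_lt_top)]
  simp_rw [toReal_gaussianPDF, gaussianPDFReal, smul_eq_mul, mul_assoc]
  rw [integrable_const_mul_iff (isUnit_iff_ne_zero.2 (by positivity))]
  simp_rw [mul_comm]

lemma integral_gaussianReal_add_const (g : ℝ → ℝ) (y : ℝ) :
    ∫ x, g x ∂gaussianReal (μ + y) v = ∫ x, g (x + y) ∂gaussianReal μ v := by
  rw [← gaussianReal_map_add_const]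
  exact (MeasurableEquiv.addRight y).measurableEmbedding.integral_map g

lemma integrable_gaussianReal_add_const_iff {g : ℝ → ℝ} (y : ℝ) :
    Integrable g (gaussianReal (μ + y) v) ↔ Integrable (fun x ↦ g (x + y)) (gaussianReal μ v) := by
  rw [← gaussianReal_map_add_const]
  exact (MeasurableEquiv.addRight y).measurableEmbedding.integrable_map_iff

lemma integral_gaussianReal_comp_neg (g : ℝ → ℝ) :
    ∫ x, g (-x) ∂gaussianReal μ v = ∫ x, g x ∂gaussianReal (-μ) v := by
  rw [← gaussianReal_map_neg]
  exact ((MeasurableEquiv.neg ℝ).measurableEmbedding.integral_map g).symm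

end ProbabilityTheory

section MirrorOption

variable {f : ℝ → ℝ}

lemma nu_eq_integral_gaussianReal {s : ℝ} (hs : 0 ≤ s) (z : ℝ) :
    nu f z s = ∫ x, f (rexp x) ∂gaussianReal (z - s / 2) s.toNNReal := by
  rcases hs.eq_or_lt with rfl | hs
  · simp [nu, gaussianReal_zero_var]
  · rw [nu, if_neg hs.ne', integral_gaussianReal_eq_mul_integral (by simpa using hs),
      Real.coe_toNNReal _ hs.le]
    congr 2 with x
    ring_nf

lemma integrable_comp_exp_gaussianReal
    (hint : ∀ z s : ℝ, 0 < s →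
      Integrable (fun x : ℝ => f (rexp x) * rexp (-(x - z + s/2)^2 / (2*s))))
    (μ : ℝ) {v : ℝ≥0} (hv : v ≠ 0) :
    Integrable (fun x ↦ f (rexp x)) (gaussianReal μ v) := by
  rw [integrable_gaussianReal_iff hv]
  simpa [show ∀ x, x - (μ + v / 2) + v / 2 = x - μ by intro; ring]
    using hint (μ + v / 2) v (by positivity)

lemma nu_monotone (hmono : MonotoneOn f (Set.Ioi 0))
    (hint : ∀ z s : ℝ, 0 < s →
      Integrable (fun x : ℝ => f (rexp x) * rexp (-(x - z + s/2)^2 / (2*s))))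
    {s : ℝ} (hs : 0 ≤ s) : Monotone (nu f · s) := by
  have hmono_exp : Monotone (fun x ↦ f (rexp x)) := fun a b hab ↦
    hmono (exp_pos a) (exp_pos b) (exp_le_exp.2 hab)
  intro z₁ z₂ hz
  rcases hs.eq_or_lt with rfl | hs
  · simpa [nu] using hmono_exp hz
  have hv : s.toNNReal ≠ 0 := by simpa using hs
  simp only [nu_eq_integral_gaussianReal hs.le, sub_eq_neg_add _ (s / 2),
    integral_gaussianReal_add_const]
  refine integral_mono ?_ ?_ fun x ↦ hmono_exp (by linarith)
  all_goals
    exact (integrable_gaussianReal_add_const_iff (g := fun x ↦ f (rexp x)) _).1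
      (integrable_comp_exp_gaussianReal hint _ hv)

lemma integral_nu_gaussianReal
    (hint : ∀ z s : ℝ, 0 < s →
      Integrable (fun x : ℝ => f (rexp x) * rexp (-(x - z + s/2)^2 / (2*s))))
    {S T : ℝ} (hS : 0 ≤ S) (hT : 0 < T) (z m : ℝ) :
    ∫ u, nu f (z + u) S ∂gaussianReal m T.toNNReal = nu f (z + m + T / 2) (S + T) := by
  calc ∫ u, nu f (z + u) S ∂gaussianReal m T.toNNReal
      = ∫ u, ∫ x, f (rexp (u + x)) ∂gaussianReal (z - S / 2) S.toNNReal
          ∂gaussianReal m T.toNNReal := by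
        congr 1 with u
        rw [nu_eq_integral_gaussianReal hS, show z + u - S / 2 = z - S / 2 + u by ring,
          integral_gaussianReal_add_const]
        simp_rw [add_comm]
    _ = ∫ x, f (rexp x) ∂(gaussianReal m T.toNNReal ∗ gaussianReal (z - S / 2) S.toNNReal) := by
        rw [integral_conv]
        rw [gaussianReal_conv_gaussianReal]
        exact integrable_comp_exp_gaussianReal hint _ (by positivity)
    _ = nu f (z + m + T / 2) (S + T) := by
        rw [gaussianReal_conv_gaussianReal, ← Real.toNNReal_add hT.le hS, add_comm T S,
          nu_eq_integral_gaussianReal (by positivity)]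
        congr 2
        ring

end MirrorOption

theorem mirror_option_value_increasing_general
    (f : ℝ → ℝ) (hmono : MonotoneOn f (Set.Ioi 0))
    (hint : ∀ z s : ℝ, 0 < s →
      Integrable (fun x : ℝ => f (Real.exp x) * Real.exp (-(x - z + s/2)^2 / (2*s))))
    (σ ε α : ℝ) (hσ : 0 < σ) (hε : 0 < ε)
    (Q : ℕ → ℝ → ℝ)
    (hQ0 : ∀ y, Q 0 y = f (Real.exp y))
    (hQrec : ∀ n y, Q (n+1) y =
      max ((σ * Real.sqrt (2 * Real.pi * ε))⁻¹ *
             ∫ u : ℝ, Q n (y + u) * Real.exp (-(u - α*ε + σ^2*ε/2)^2 / (2*σ^2*ε)))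
          ((σ * Real.sqrt (2 * Real.pi * ε))⁻¹ *
             ∫ u : ℝ, Q n (y - u) * Real.exp (-(u - α*ε + σ^2*ε/2)^2 / (2*σ^2*ε)))) :
    ∀ n : ℕ, ∀ y : ℝ,
      Q n y = nu f (y + (σ^2/2 + |α - σ^2/2|) * (n*ε)) (σ^2 * (n*ε)) := by
  set m := (α - σ ^ 2 / 2) * ε
  set T := σ ^ 2 * ε
  have hT : 0 < T := by positivity
  have hkernel (g : ℝ → ℝ) : (σ * √(2 * π * ε))⁻¹ *
      ∫ u, g u * rexp (-(u - α * ε + σ ^ 2 * ε / 2) ^ 2 / (2 * σ ^ 2 * ε)) =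
        ∫ u, g u ∂gaussianReal m T.toNNReal := by
    rw [integral_gaussianReal_eq_mul_integral (by simpa using hT), Real.coe_toNNReal _ hT.le,
      show 2 * π * T = σ ^ 2 * (2 * π * ε) by ring, Real.sqrt_mul (sq_nonneg σ), Real.sqrt_sq hσ.le]
    congr 2 with u
    simp only [m, T]
    ring_nf
  intro n
  induction n with
  | zero => simp [hQ0, nu]
  | succ n ih =>
    intro y
    have hS : 0 ≤ σ ^ 2 * (n * ε) := by positivity
    set z := y + (σ ^ 2 / 2 + |α - σ ^ 2 / 2|) * (n * ε)
    have hplus : ∫ u, Q n (y + u) ∂gaussianReal m T.toNNReal =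
        nu f (z + m + T / 2) (σ ^ 2 * (n * ε) + T) := by
      rw [← integral_nu_gaussianReal hint hS hT]
      simp_rw [ih, z, add_right_comm y]
    have hminus : ∫ u, Q n (y - u) ∂gaussianReal m T.toNNReal =
        nu f (z + -m + T / 2) (σ ^ 2 * (n * ε) + T) := by
      rw [← integral_nu_gaussianReal hint hS hT, ← integral_gaussianReal_comp_neg]
      simp_rw [ih, z, sub_eq_add_neg, add_right_comm y]
    rw [hQrec, hkernel, hkernel, hplus, hminus, ← (nu_monotone hmono hint (by positivity)).map_max,
      max_add_add_right, max_add_add_left, ← abs_eq_max_neg, abs_mul, abs_of_pos hε]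
    congr 1 <;> push_cast <;> ring

/-- Theorem 1 (increasing payoff): the discrete-time value of a European mirror option,
defined by the backward recursion with holder maximization over mirror/no-mirror, is
`q*₊(nε) = ν(x*_{T-nε} + (σ²/2 + |α - σ²/2|)nε, σ²nε)`.  Here `Q n y` is the value with
`n` steps to maturity when the current log mirror underlying is `y`. -/
theorem mirror_option_value_increasing
    (f : ℝ → ℝ) (hmono : MonotoneOn f (Set.Ioi 0))
    (hint : ∀ z s : ℝ, 0 < s →
      Integrable (fun x : ℝ => f (Real.exp x) * Real.exp (-(x - z + s/2)^2 / (2*s))))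
    (σ r δ ε α : ℝ) (hσ : 0 < σ) (hε : 0 < ε) (hα : α = r - δ)
    (Q : ℕ → ℝ → ℝ)
    (hQ0 : ∀ y, Q 0 y = f (Real.exp y))
    (hQrec : ∀ n y, Q (n+1) y =
      max ((σ * Real.sqrt (2 * Real.pi * ε))⁻¹ *
             ∫ u : ℝ, Q n (y + u) * Real.exp (-(u - α*ε + σ^2*ε/2)^2 / (2*σ^2*ε)))
          ((σ * Real.sqrt (2 * Real.pi * ε))⁻¹ *
             ∫ u : ℝ, Q n (y - u) * Real.exp (-(u - α*ε + σ^2*ε/2)^2 / (2*σ^2*ε)))) :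
    ∀ n : ℕ, ∀ y : ℝ,
      Q n y = nu f (y + (σ^2/2 + |α - σ^2/2|) * (n*ε)) (σ^2 * (n*ε)) :=
  mirror_option_value_increasing_general f hmono hint σ ε α hσ hε Q hQ0 hQrec
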